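/- Let M be a faithful multiplication R-module. Then the following are equivalent: (a) R is a reduced ring (equivalently, M is a reduced module); (b) the zero submodule of M is a quasi z°-submodule of M. -/

import Mathlib

variable {R : Type*} [CommRing R] {M : Type*} [AddCommGroup M] [Module R M]

/-- `M` is a multiplication module: every submodule is `IM` for some ideal `I`. -/
def IsMultiplicationModule (R M : Type*) [CommRing R] [AddCommGroup M] [Module R M] : Prop :=
  ∀ N : Submodule R M, ∃ I : Ideal R, N = I • (⊤ : Submodule R M)

/-- A prime submodule. -/
def Submodule.IsPrimeSubmodule (P : Submodule R M) : Prop :=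
  P ≠ ⊤ ∧ ∀ (r : R) (m : M), r • m ∈ P → m ∈ P ∨ r ∈ P.colon ⊤

/-- `M` is reduced: the intersection of all prime submodules is zero. -/
def IsReducedModule (R M : Type*) [CommRing R] [AddCommGroup M] [Module R M] : Prop :=
  sInf {P : Submodule R M | P.IsPrimeSubmodule} = ⊥

/-- A minimal prime submodule of `M`. -/
def Submodule.IsMinimalPrime (P : Submodule R M) : Prop :=
  P.IsPrimeSubmodule ∧ ∀ Q : Submodule R M, Q.IsPrimeSubmodule → Q ≤ P → Q = P

/-- `𝔓_K`: the intersection of all minimal prime submodules containing `K`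
(equal to `M` if there are none). -/
def primeRad (K : Submodule R M) : Submodule R M :=
  sInf {P : Submodule R M | P.IsMinimalPrime ∧ K ≤ P}

/-- `V(K)`: the set of minimal prime submodules containing `K`. -/
def Vset (K : Submodule R M) : Set (Submodule R M) :=
  {P : Submodule R M | P.IsMinimalPrime ∧ K ≤ P}

/-- A quasi `z°`-submodule. -/
def IsQuasiZSubmodule (N : Submodule R M) : Prop :=
  N ≠ ⊤ ∧ ∀ a ∈ N.colon ⊤, primeRad (Ideal.span {a} • (⊤ : Submodule R M)) ≤ N

/-- `𝔓_I` for an ideal: intersection of all minimal prime ideals of `R` containing `I`. -/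
def idealPrimeRad (I : Ideal R) : Ideal R :=
  sInf {p : Ideal R | p ∈ minimalPrimes R ∧ I ≤ p}

/-- A `z°`-ideal of `R`. -/
def IsZIdeal (I : Ideal R) : Prop :=
  I ≠ ⊤ ∧ ∀ a ∈ I, idealPrimeRad (Ideal.span {a}) ≤ I

/-- `(0 :_M J)` for an ideal `J`. -/
def pointAnn (J : Ideal R) : Submodule R M where
  carrier := {m : M | ∀ j ∈ J, j • m = 0}
  zero_mem' := by intro j _; simp
  add_mem' := by
    intro a b ha hb j hj
    rw [smul_add, ha j hj, hb j hj, add_zero]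
  smul_mem' := by
    intro c m hm j hj
    rw [smul_comm, hm j hj, smul_zero]

/-! Faithfulness gives `(0 :_R M) = 0`, so the only element to test in the quasi z°-condition
for `0` is `a = 0`, and both (a) and (b) become: the minimal prime submodules of `M` meet in `0`.
If `bⁿ = 0`, every prime submodule contains `bM`, so this forces `bM = 0`, i.e. `b = 0`.
Conversely, for `x ≠ 0` write `Rx = IM` and pick `a ∈ I` nonzero. As `a` is not nilpotent and
`aM ⊆ Rx`, no `aⁿx` vanishes, and a submodule maximal among those avoiding every `aⁿx` is prime;
it misses `x` and, by Zorn's lemma, contains a minimal prime submodule. -/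

namespace Submodule

theorem mem_colon_top {N : Submodule R M} {r : R} : r ∈ N.colon ⊤ ↔ ∀ m : M, r • m ∈ N := by
  simp [mem_colon]

theorem IsPrimeSubmodule.mem_colon_top_of_smul_mem {P : Submodule R M}
    (hP : P.IsPrimeSubmodule) {r : R} {m : M} (hrm : r • m ∈ P) (hm : m ∉ P) : r ∈ P.colon ⊤ :=
  (hP.2 r m hrm).resolve_left hm

theorem IsPrimeSubmodule.smul_mem_of_pow_smul_mem {P : Submodule R M}
    (hP : P.IsPrimeSubmodule) {b : R} {m : M} : ∀ {n : ℕ}, b ^ n • m ∈ P → b • m ∈ P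
  | 0, h => P.smul_mem b (by simpa using h)
  | n + 1, h => by
    rw [pow_succ', mul_smul] at h
    rcases hP.2 b _ h with h | h
    · exact hP.smul_mem_of_pow_smul_mem h
    · exact mem_colon_top.mp h m

theorem isPrimeSubmodule_sInf_of_isChain {c : Set (Submodule R M)} (hc : IsChain (· ≤ ·) c)
    (hne : c.Nonempty) (hprime : ∀ P ∈ c, P.IsPrimeSubmodule) : (sInf c).IsPrimeSubmodule := by
  obtain ⟨P₀, hP₀⟩ := hne
  refine ⟨fun htop => (hprime P₀ hP₀).1 (top_le_iff.mp (htop ▸ sInf_le hP₀)), fun r m hrm => ?_⟩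
  refine or_iff_not_imp_left.mpr fun hm => ?_
  obtain ⟨P, hP, hmP⟩ : ∃ P ∈ c, m ∉ P := by simpa [mem_sInf] using hm
  have hr : r ∈ P.colon ⊤ := (hprime P hP).mem_colon_top_of_smul_mem (mem_sInf.mp hrm P hP) hmP
  refine mem_colon_top.mpr fun x => mem_sInf.mpr fun Q hQ => ?_
  rcases hc.total hP hQ with hPQ | hQP
  · exact hPQ (mem_colon_top.mp hr x)
  · have hmQ : m ∉ Q := fun h => hmP (hQP h)
    exact mem_colon_top.mp ((hprime Q hQ).mem_colon_top_of_smul_mem (mem_sInf.mp hrm Q hQ) hmQ) x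

theorem IsPrimeSubmodule.exists_isMinimalPrime_le {P : Submodule R M} (hP : P.IsPrimeSubmodule) :
    ∃ Q : Submodule R M, Q.IsMinimalPrime ∧ Q ≤ P := by
  obtain ⟨Q, hQP, hQ⟩ := @zorn_le_nonempty₀ (Submodule R M)ᵒᵈ _
    {Q | (OrderDual.ofDual Q).IsPrimeSubmodule}
    (fun c hcs hc Q hQ => ⟨OrderDual.toDual (sInf (OrderDual.toDual ⁻¹' c)),
      isPrimeSubmodule_sInf_of_isChain hc.symm ⟨Q, hQ⟩ hcs,
      fun _ hQ => sInf_le (α := Submodule R M) hQ⟩)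
    P hP
  exact ⟨Q, ⟨hQ.1, fun Q' hQ' hQ'Q => le_antisymm hQ'Q (hQ.2 hQ' hQ'Q)⟩, hQP⟩

theorem isPrimeSubmodule_of_maximal_pow_smul_notMem {a : R} {x : M}
    (hax : ∀ m : M, a • m ∈ span R {x}) {P : Submodule R M}
    (hP : Maximal (fun N : Submodule R M => ∀ n : ℕ, a ^ n • x ∉ N) P) : P.IsPrimeSubmodule := by
  have hescape : ∀ y ∉ P, ∃ (n : ℕ) (s : R), a ^ n • x - s • y ∈ P := by
    intro y hy
    by_contra! h
    refine hy (hP.2 (y := P ⊔ span R {y}) (fun n hn => ?_) le_sup_left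
      (mem_sup_right (mem_span_singleton_self y)))
    obtain ⟨p, hp, z, hz, hpz⟩ := mem_sup.mp hn
    obtain ⟨s, rfl⟩ := mem_span_singleton.mp hz
    exact h n s (by rwa [← hpz, add_sub_cancel_right])
  refine ⟨fun htop => hP.1 0 (by simp [htop]), fun r m hrm => or_iff_not_imp_left.mpr fun hm => ?_⟩
  obtain ⟨n, s, hn⟩ := hescape m hm
  have hran : (r * a ^ n) • x ∈ P := by
    convert P.add_mem (P.smul_mem r hn) (P.smul_mem s hrm) using 1
    module
  refine mem_colon_top.mpr fun m' => by_contra fun hm' => ?_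
  obtain ⟨k, c, hk⟩ := hescape _ hm'
  obtain ⟨t, ht⟩ := mem_span_singleton.mp (hax m')
  apply hP.1 (n + k + 1)
  have hsplit : a ^ (n + k + 1) • x
      = a ^ (n + 1) • (a ^ k • x - c • r • m') + (c * t) • ((r * a ^ n) • x) := by
    linear_combination (norm := module) (c * r * a ^ n) • ht.symm
  rw [hsplit]
  exact P.add_mem (P.smul_mem _ hk) (P.smul_mem _ hran)

theorem exists_isPrimeSubmodule_notMem_of_pow_smul_ne_zero {a : R} {x : M}
    (hax : ∀ m : M, a • m ∈ span R {x}) (hx : ∀ n : ℕ, a ^ n • x ≠ 0) :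
    ∃ P : Submodule R M, P.IsPrimeSubmodule ∧ x ∉ P := by
  obtain ⟨P, -, hP⟩ := zorn_le_nonempty₀ {N : Submodule R M | ∀ n : ℕ, a ^ n • x ∉ N}
    (fun c hcs hc N hN => ⟨sSup c, fun n hn => by
      obtain ⟨Q, hQ, hnQ⟩ := (mem_sSup_of_directed ⟨N, hN⟩ hc.directedOn).mp hn
      exact hcs hQ n hnQ, fun _ => le_sSup⟩)
    ⊥ (fun n hn => hx n ((mem_bot R).mp hn))
  exact ⟨P, isPrimeSubmodule_of_maximal_pow_smul_notMem hax hP, by simpa using hP.1 0⟩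

end Submodule

open Submodule

theorem exists_pow_smul_ne_zero_of_ne_zero [IsReduced R]
    (hfaithful : (⊥ : Submodule R M).colon ⊤ = ⊥) (hmul : IsMultiplicationModule R M)
    {x : M} (hx : x ≠ 0) : ∃ a : R, (∀ m : M, a • m ∈ span R {x}) ∧ ∀ n : ℕ, a ^ n • x ≠ 0 := by
  obtain ⟨I, hI⟩ := hmul (span R {x})
  obtain ⟨a, haI, ha⟩ : ∃ a ∈ I, a ≠ 0 := by
    by_contra! h
    rw [(Submodule.eq_bot_iff I).mpr h, bot_smul, span_singleton_eq_bot] at hI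
    exact hx hI
  have hax : ∀ m : M, a • m ∈ span R {x} := fun m => hI ▸ smul_mem_smul haI trivial
  refine ⟨a, hax, fun n hn => ha (eq_zero_of_pow_eq_zero (n := n + 1) ?_)⟩
  rw [← Ideal.mem_bot, ← hfaithful, mem_colon_top]
  intro m
  obtain ⟨t, ht⟩ := mem_span_singleton.mp (hax m)
  rw [mem_bot, pow_succ, mul_smul, ← ht, smul_comm, hn, smul_zero]

theorem primeRad_bot_eq_bot [IsReduced R] (hfaithful : (⊥ : Submodule R M).colon ⊤ = ⊥)
    (hmul : IsMultiplicationModule R M) : primeRad (⊥ : Submodule R M) = ⊥ := by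
  refine eq_bot_iff.mpr fun x hx => (mem_bot R).mpr (by_contra fun hx0 => ?_)
  obtain ⟨a, hax, ha⟩ := exists_pow_smul_ne_zero_of_ne_zero hfaithful hmul hx0
  obtain ⟨P, hP, hxP⟩ := exists_isPrimeSubmodule_notMem_of_pow_smul_ne_zero hax ha
  obtain ⟨Q, hQ, hQP⟩ := hP.exists_isMinimalPrime_le
  exact hxP (hQP (mem_sInf.mp hx Q ⟨hQ, bot_le⟩))

theorem isReduced_of_primeRad_bot_eq_bot (hfaithful : (⊥ : Submodule R M).colon ⊤ = ⊥)
    (h : primeRad (⊥ : Submodule R M) = ⊥) : IsReduced R := by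
  refine ⟨fun b ⟨n, hn⟩ => ?_⟩
  rw [← Ideal.mem_bot, ← hfaithful, mem_colon_top]
  exact fun m => h.le <| mem_sInf.mpr fun P hP =>
    hP.1.1.smul_mem_of_pow_smul_mem (n := n) (by simp [hn])

theorem isReduced_iff_primeRad_bot_eq_bot (hfaithful : (⊥ : Submodule R M).colon ⊤ = ⊥)
    (hmul : IsMultiplicationModule R M) : IsReduced R ↔ primeRad (⊥ : Submodule R M) = ⊥ :=
  ⟨fun _ => primeRad_bot_eq_bot hfaithful hmul, isReduced_of_primeRad_bot_eq_bot hfaithful⟩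

theorem isQuasiZSubmodule_bot_iff [Nontrivial M] (hfaithful : (⊥ : Submodule R M).colon ⊤ = ⊥) :
    IsQuasiZSubmodule (⊥ : Submodule R M) ↔ primeRad (⊥ : Submodule R M) = ⊥ := by
  rw [IsQuasiZSubmodule, hfaithful]
  simp

theorem stmt19 [Nontrivial M] (hfaithful : (⊥ : Submodule R M).colon ⊤ = ⊥)
    (hmul : IsMultiplicationModule R M) :
    IsReduced R ↔ IsQuasiZSubmodule (⊥ : Submodule R M) := by
  rw [isReduced_iff_primeRad_bot_eq_bot hfaithful hmul, isQuasiZSubmodule_bot_iff hfaithful]
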